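/- Let 0 < σ₁ < 1/2 and define ψ(u) = u/(1−σ₁) − ∑_{n<u} (1−n/u)^{−σ₁} for u > 1. If ∫_1^∞ |ψ(u)|² u^{−1−2r} du < ∞ for some r > 0 with r ≠ 1, then r > σ₁. -/

import Mathlib

open MeasureTheory Set

/-!
Suppose `r ≤ σ₁`. Just to the right of an integer `k ≥ 1`, the singular last term
`(1 - k/u)^(-σ₁)` of the sum dominates, and comparing the remaining terms with
`∫ (u - t)^(-σ₁) dt` (concavity of `t ↦ t^(1-σ₁)`) gives `ψ(u) ≤ -u^σ₁` on a window
`(k, k + δ]` of fixed length. There the integrand is at least `u^(2σ₁-1-2r) ≥ 1/u`,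
so the integral over `(1, ∞)` dominates a multiple of the harmonic series.
-/

noncomputable def psi (σ u : ℝ) : ℝ :=
  u / (1 - σ) - ∑ n ∈ Finset.Ico 1 ⌈u⌉₊, (1 - (n : ℝ) / u) ^ (-σ)

theorem rpow_add_one_sub_rpow_le {a p : ℝ} (ha : 0 < a) (hp0 : 0 ≤ p) (hp1 : p ≤ 1) :
    (a + 1) ^ p - a ^ p ≤ p * a ^ (p - 1) := by
  have hbern := rpow_one_add_le_one_add_mul_self
    (by linarith [inv_pos.2 ha] : (-1 : ℝ) ≤ a⁻¹) hp0 hp1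
  calc (a + 1) ^ p - a ^ p = a ^ p * ((1 + a⁻¹) ^ p - 1) := by
        rw [mul_sub, mul_one, ← Real.mul_rpow ha.le (by positivity), mul_add, mul_one,
          mul_inv_cancel₀ ha.ne']
    _ ≤ a ^ p * (p * a⁻¹) := by gcongr; linarith
    _ = p * a ^ (p - 1) := by rw [Real.rpow_sub_one ha.ne']; ring

theorem rpow_sub_rpow_sub_natCast_le_sum {p u : ℝ} (hp0 : 0 ≤ p) (hp1 : p ≤ 1) :
    ∀ m : ℕ, (m : ℝ) < u →
      u ^ p - (u - m) ^ p ≤ p * ∑ n ∈ Finset.Ico 1 (m + 1), (u - n) ^ (p - 1)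
  | 0, _ => by simp
  | m + 1, hm => by
    push_cast at hm
    have ih := rpow_sub_rpow_sub_natCast_le_sum hp0 hp1 m (by linarith)
    have step := rpow_add_one_sub_rpow_le (a := u - (m + 1)) (by linarith) hp0 hp1
    rw [Finset.sum_Ico_succ_top (by omega), mul_add]
    push_cast
    rw [show u - (m + 1) + 1 = u - m by ring] at step
    linarith

theorem psi_eq_rpow_mul {σ u : ℝ} (hu : 0 < u) :
    psi σ u = u ^ σ * (u ^ (1 - σ) / (1 - σ) - ∑ n ∈ Finset.Ico 1 ⌈u⌉₊, (u - n) ^ (-σ)) := by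
  have hterm : ∀ n ∈ Finset.Ico 1 ⌈u⌉₊, (1 - (n : ℝ) / u) ^ (-σ) = u ^ σ * (u - n) ^ (-σ) := by
    intro n hn
    have hnu : (n : ℝ) < u := Nat.lt_ceil.1 (Finset.mem_Ico.1 hn).2
    rw [show 1 - (n : ℝ) / u = (u - n) * u⁻¹ by field_simp,
      Real.mul_rpow (by linarith) (by positivity), Real.inv_rpow hu.le, Real.rpow_neg hu.le,
      inv_inv, mul_comm]
  rw [psi, Finset.sum_congr rfl hterm, ← Finset.mul_sum, mul_sub, mul_div_assoc',
    ← Real.rpow_add hu, add_sub_cancel, Real.rpow_one]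

theorem rpow_div_sub_sum_le_neg_one {σ δ u : ℝ} (hσ0 : 0 ≤ σ) (hσ1 : σ < 1) (hδ1 : δ ≤ 1)
    (hδ : 1 + 2 / (1 - σ) ≤ δ ^ (-σ)) {j : ℕ} (hu : u ∈ Ioc ((j : ℝ) + 1) (j + 1 + δ)) :
    u ^ (1 - σ) / (1 - σ) - ∑ n ∈ Finset.Ico 1 (j + 2), (u - n) ^ (-σ) ≤ -1 := by
  obtain ⟨hju, huj⟩ := hu
  have hσ : 0 < 1 - σ := by linarith
  have hbulk : (u ^ (1 - σ) - (u - j) ^ (1 - σ)) / (1 - σ) ≤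
      ∑ n ∈ Finset.Ico 1 (j + 1), (u - n) ^ (-σ) := by
    rw [div_le_iff₀ hσ, mul_comm, show -σ = 1 - σ - 1 by ring]
    exact rpow_sub_rpow_sub_natCast_le_sum hσ.le (by linarith) j (by linarith)
  have hsingular : δ ^ (-σ) ≤ (u - (j + 1 : ℕ)) ^ (-σ) :=
    Real.rpow_le_rpow_of_nonpos (by push_cast; linarith) (by push_cast; linarith)
      (by linarith)
  have hnear : (u - j) ^ (1 - σ) / (1 - σ) ≤ 2 / (1 - σ) := by
    gcongr
    calc (u - j) ^ (1 - σ) ≤ (u - j) ^ (1 : ℝ) :=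
          Real.rpow_le_rpow_of_exponent_le (by linarith) (by linarith)
      _ ≤ 2 := by rw [Real.rpow_one]; linarith
  rw [Finset.sum_Ico_succ_top (by omega)]
  rw [sub_div] at hbulk
  linarith

theorem psi_le_neg_rpow {σ δ u : ℝ} (hσ0 : 0 ≤ σ) (hσ1 : σ < 1) (hδ1 : δ ≤ 1)
    (hδ : 1 + 2 / (1 - σ) ≤ δ ^ (-σ)) {j : ℕ} (hu : u ∈ Ioc ((j : ℝ) + 1) (j + 1 + δ)) :
    psi σ u ≤ -u ^ σ := by
  have hu0 : 0 < u := by linarith [hu.1, (j.cast_nonneg : (0 : ℝ) ≤ j)]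
  have hceil : ⌈u⌉₊ = j + 2 := by
    rw [Nat.ceil_eq_iff (by omega)]
    push_cast
    constructor <;> linarith [hu.1, hu.2]
  rw [psi_eq_rpow_mul hu0, hceil]
  calc _ ≤ u ^ σ * (-1) :=
        mul_le_mul_of_nonneg_left (rpow_div_sub_sum_le_neg_one hσ0 hσ1 hδ1 hδ hu) (by positivity)
    _ = -u ^ σ := mul_neg_one _

theorem inv_le_psi_sq_mul_rpow {σ r δ u : ℝ} (hσ0 : 0 ≤ σ) (hσ1 : σ < 1) (hrσ : r ≤ σ)
    (hδ1 : δ ≤ 1) (hδ : 1 + 2 / (1 - σ) ≤ δ ^ (-σ)) {j : ℕ}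
    (hu : u ∈ Ioc ((j : ℝ) + 1) (j + 1 + δ)) :
    ((j : ℝ) + 2)⁻¹ ≤ psi σ u ^ 2 * u ^ (-1 - 2 * r) := by
  have hu1 : 1 ≤ u := by linarith [hu.1, (j.cast_nonneg : (0 : ℝ) ≤ j)]
  have hu0 : 0 < u := by linarith
  have hpsi : u ^ σ ≤ -psi σ u := by linarith [psi_le_neg_rpow hσ0 hσ1 hδ1 hδ hu]
  calc ((j : ℝ) + 2)⁻¹ ≤ u⁻¹ := inv_anti₀ hu0 (by linarith [hu.2])
    _ = u ^ (r * 2) * u ^ (-1 - 2 * r) := by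
        rw [← Real.rpow_add hu0, ← Real.rpow_neg_one]
        ring_nf
    _ ≤ u ^ (σ * 2) * u ^ (-1 - 2 * r) := by
        gcongr
    _ = (u ^ σ) ^ 2 * u ^ (-1 - 2 * r) := by
        rw [show σ * 2 = σ * ((2 : ℕ) : ℝ) by norm_num, Real.rpow_mul_natCast hu0.le]
    _ ≤ psi σ u ^ 2 * u ^ (-1 - 2 * r) := by
        rw [← neg_sq (psi σ u)]
        gcongr

theorem not_integrableOn_Ioi_one_of_inv_le {f : ℝ → ℝ} {δ : ℝ} (hδ0 : 0 < δ) (hδ1 : δ ≤ 1)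
    (hf : ∀ j : ℕ, ∀ u ∈ Ioc ((j : ℝ) + 1) (j + 1 + δ), ((j : ℝ) + 2)⁻¹ ≤ f u) :
    ¬ IntegrableOn f (Ioi 1) := by
  intro hint
  set s : ℕ → Set ℝ := fun j => Ioc ((j : ℝ) + 1) (j + 1 + δ)
  have hs : ⋃ j, s j ⊆ Ioi 1 := iUnion_subset fun j u (hu : u ∈ Ioc _ _) => mem_Ioi.2 <| by
    linarith [hu.1, (j.cast_nonneg : (0 : ℝ) ≤ j)]
  have hdisj : Pairwise (Function.onFun Disjoint s) := (pairwise_disjoint_on s).2 fun i j hij =>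
    Ioc_disjoint_Ioc_of_le (by
      have : (i : ℝ) + 1 ≤ j := by exact_mod_cast hij
      linarith)
  have hsum := (hasSum_integral_iUnion (fun _ => measurableSet_Ioc) hdisj
    (hint.mono_set hs)).summable
  have hlow : ∀ j : ℕ, ((j : ℝ) + 2)⁻¹ * δ ≤ ∫ u in s j, f u := fun j => by
    have := setIntegral_ge_of_const_le_real measurableSet_Ioc measure_Ioc_lt_top.ne (hf j)
      (hint.mono_set ((subset_iUnion s j).trans hs))
    rwa [Real.volume_real_Ioc_of_le (by linarith), add_sub_cancel_left] at this
  have hharmonic : Summable fun j : ℕ => ((j : ℝ) + 2)⁻¹ := by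
    simpa [hδ0.ne'] using
      (hsum.of_nonneg_of_le (fun j => by positivity) hlow).mul_right δ⁻¹
  exact Real.not_summable_natCast_inv ((summable_nat_add_iff 2).1 (by exact_mod_cast hharmonic))

theorem exists_pos_le_one_le_rpow_neg {σ C : ℝ} (hσ : 0 < σ) (hC : 1 ≤ C) :
    ∃ δ : ℝ, 0 < δ ∧ δ ≤ 1 ∧ C ≤ δ ^ (-σ) := by
  refine ⟨C ^ (-σ⁻¹), by positivity, Real.rpow_le_one_of_one_le_of_nonpos hC (by simp [hσ.le]),
    ?_⟩
  rw [← Real.rpow_mul (by linarith), neg_mul_neg, inv_mul_cancel₀ hσ.ne', Real.rpow_one]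

theorem stmt10_general (σ₁ r : ℝ) (h0 : 0 < σ₁) (h1 : σ₁ < 1/2)
    (hint : IntegrableOn
      (fun u : ℝ => (u/(1-σ₁) - ∑ n ∈ Finset.Ico 1 ⌈u⌉₊, (1 - (n:ℝ)/u)^(-σ₁))^2 * u^(-1-2*r))
      (Set.Ioi 1)) :
    σ₁ < r := by
  by_contra! hrσ
  have hσ1 : σ₁ < 1 := by linarith
  obtain ⟨δ, hδ0, hδ1, hδ⟩ := exists_pos_le_one_le_rpow_neg h0
    (le_add_of_nonneg_right (div_nonneg zero_le_two (by linarith)) : 1 ≤ 1 + 2 / (1 - σ₁))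
  exact not_integrableOn_Ioi_one_of_inv_le hδ0 hδ1
    (fun j _ hu => inv_le_psi_sq_mul_rpow h0.le hσ1 hrσ hδ1 hδ hu) hint

theorem stmt10 (σ₁ r : ℝ) (h0 : 0 < σ₁) (h1 : σ₁ < 1/2) (hr : 0 < r) (hr1 : r ≠ 1)
    (hint : IntegrableOn
      (fun u : ℝ => (u/(1-σ₁) - ∑ n ∈ Finset.Ico 1 ⌈u⌉₊, (1 - (n:ℝ)/u)^(-σ₁))^2 * u^(-1-2*r))
      (Set.Ioi 1)) :
    σ₁ < r :=
  stmt10_general σ₁ r h0 h1 hint
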